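/- arXiv:2112.09625 — 3 statements merged into one kernel-verified Lean document; each statement's English description precedes it below -/
import Mathlib

section
/- Let α be a finite type and let P, Q be distributions on α. Define ψ_P : α → ℝ by ψ_P x = √(P x) and ψ_Q x = √(Q x), and define v : α × α → ℝ by v (x, y) = ψ_P x * ψ_Q y + ψ_Q x * ψ_P y. Then (1/4) * ∑ (x,y), (v (x,y))² = (1/2) * (1 + (1 − d_H(P,Q)²)²). (This is Corollary 4.2: the probability that the comparison circuit outputs 1 on the purifications of P and Q equals (1/2)(1 + (1 − d_H²(P,Q))²).) -/
/-!
Write `a = √P` and `b = √Q`; both are unit vectors, and their inner product is the Bhattacharyya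
coefficient `BC = 1 - d_H(P,Q)²`. The squared norm of the symmetrised tensor `a ⊗ b + b ⊗ a` is
`2‖a‖²‖b‖² + 2⟨a,b⟩² = 2 + 2 BC²`, and a quarter of it is the claimed probability.
-/

open Finset

/-- The Hellinger distance between two distributions on a finite type:
`d_H(P,Q) = (1/√2)·√(∑ x, (√(P x) − √(Q x))²)`. -/
noncomputable def hellingerDist {α : Type*} [Fintype α] (P Q : α → ℝ) : ℝ :=
  (1 / Real.sqrt 2) * Real.sqrt (∑ x, (Real.sqrt (P x) - Real.sqrt (Q x)) ^ 2)

section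

variable {α : Type*} [Fintype α]

noncomputable def bhattacharyyaCoeff (P Q : α → ℝ) : ℝ :=
  ∑ x, Real.sqrt (P x) * Real.sqrt (Q x)

theorem sum_sq_mul_add_mul_swap {R : Type*} [CommSemiring R] (a b : α → R) :
    ∑ p : α × α, (a p.1 * b p.2 + b p.1 * a p.2) ^ 2 =
      2 * (∑ x, a x ^ 2) * (∑ x, b x ^ 2) + 2 * (∑ x, a x * b x) ^ 2 := by
  calc ∑ p : α × α, (a p.1 * b p.2 + b p.1 * a p.2) ^ 2
      = ∑ x, ∑ y, (a x ^ 2 * b y ^ 2 + b x ^ 2 * a y ^ 2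
          + 2 * (a x * b x) * (a y * b y)) := by
        rw [Fintype.sum_prod_type]
        congr! 2
        ring
    _ = _ := by
        simp only [sum_add_distrib, ← mul_sum, ← sum_mul]
        ring

theorem sum_sq_sqrt {P : α → ℝ} (hP : ∀ x, 0 ≤ P x) :
    ∑ x, Real.sqrt (P x) ^ 2 = ∑ x, P x :=
  sum_congr rfl fun x _ => Real.sq_sqrt (hP x)

theorem hellingerDist_sq {P Q : α → ℝ} (hP : ∀ x, 0 ≤ P x) (hQ : ∀ x, 0 ≤ Q x) :
    hellingerDist P Q ^ 2 = (∑ x, P x + ∑ x, Q x) / 2 - bhattacharyyaCoeff P Q := by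
  have hexpand : ∑ x, (Real.sqrt (P x) - Real.sqrt (Q x)) ^ 2 =
      ∑ x, P x + ∑ x, Q x - 2 * bhattacharyyaCoeff P Q := by
    simp only [sub_sq, sum_sub_distrib, sum_add_distrib, sum_sq_sqrt hP, sum_sq_sqrt hQ,
      bhattacharyyaCoeff, mul_sum, mul_assoc]
    ring
  rw [hellingerDist, mul_pow, Real.sq_sqrt (sum_nonneg fun x _ => sq_nonneg _), div_pow,
    Real.sq_sqrt zero_le_two, hexpand]
  ring

end

/-- Corollary 4.2: with `ψ_P x = √(P x)`, `ψ_Q x = √(Q x)` and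
`v (x,y) = ψ_P x · ψ_Q y + ψ_Q x · ψ_P y`, the probability that the comparison
circuit outputs 1 on the purifications of `P` and `Q` equals
`(1/4)·∑ (x,y), v(x,y)² = (1/2)·(1 + (1 − d_H(P,Q)²)²)`. -/
theorem comparison_circuit_output_probability {α : Type*} [Fintype α]
    (P Q : α → ℝ)
    (hP0 : ∀ x, 0 ≤ P x) (hQ0 : ∀ x, 0 ≤ Q x)
    (hP1 : ∑ x, P x = 1) (hQ1 : ∑ x, Q x = 1)
    (ψP ψQ : α → ℝ) (hψP : ∀ x, ψP x = Real.sqrt (P x))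
    (hψQ : ∀ x, ψQ x = Real.sqrt (Q x))
    (v : α × α → ℝ) (hv : ∀ x y : α, v (x, y) = ψP x * ψQ y + ψQ x * ψP y) :
    (1 / 4 : ℝ) * ∑ p : α × α, v p ^ 2 =
      (1 / 2) * (1 + (1 - hellingerDist P Q ^ 2) ^ 2) := by
  have hv' : ∀ p : α × α, v p = ψP p.1 * ψQ p.2 + ψQ p.1 * ψP p.2 := fun ⟨x, y⟩ => hv x y
  rw [sum_congr rfl fun p _ => congrArg (· ^ 2) (hv' p), sum_sq_mul_add_mul_swap]
  simp only [hψP, hψQ]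
  rw [sum_sq_sqrt hP0, sum_sq_sqrt hQ0, hellingerDist_sq hP0 hQ0, hP1, hQ1, bhattacharyyaCoeff]
  ring
end

section
/- Let α be a finite type, let η ∈ (0, 1], let k be a positive natural number, let Q, P₁, …, P_k be distributions on α, and let q₁, …, q_k ∈ [0, 1] with ∑ i, q i = 1. Let f : ℝ → ℝ be f(x) = (1/2)·(1 + (1 − x²)²). If ∑ i, q i * f (d_H(Q, P i)) ≥ 1 − 50·η², then d_H(∑ i, q i • P i, Q) ≤ 12 * η^(1/4), where (∑ i, q i • P i) is the distribution x ↦ ∑ i, q i * P i x. (Lemma 4.6.) -/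
open Finset Real

noncomputable def bhattacharyya {α : Type*} [Fintype α] (P Q : α → ℝ) : ℝ :=
  ∑ x, √(P x) * √(Q x)

lemma sum_mul_sqrt_le_sqrt_sum_mul {ι : Type*} (s : Finset ι) {q p : ι → ℝ}
    (hq0 : ∀ i ∈ s, 0 ≤ q i) (hq1 : ∑ i ∈ s, q i = 1) (hp : ∀ i ∈ s, 0 ≤ p i) :
    ∑ i ∈ s, q i * √(p i) ≤ √(∑ i ∈ s, q i * p i) :=
  strictConcaveOn_sqrt.concaveOn.le_map_sum hq0 hq1 hp

section Hellinger

variable {α : Type*} [Fintype α]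

lemma hellingerDist_comm (P Q : α → ℝ) : hellingerDist P Q = hellingerDist Q P := by
  simp only [hellingerDist, sub_sq_comm (√(P _))]

lemma bhattacharyya_nonneg (P Q : α → ℝ) : 0 ≤ bhattacharyya P Q :=
  sum_nonneg fun _ _ => mul_nonneg (sqrt_nonneg _) (sqrt_nonneg _)

lemma hellingerDist_sq_eq_one_sub_bhattacharyya {P Q : α → ℝ}
    (hP0 : ∀ x, 0 ≤ P x) (hQ0 : ∀ x, 0 ≤ Q x)
    (hP1 : ∑ x, P x = 1) (hQ1 : ∑ x, Q x = 1) :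
    hellingerDist P Q ^ 2 = 1 - bhattacharyya P Q := by
  have expand : ∀ x, (√(P x) - √(Q x)) ^ 2 = P x + Q x - 2 * (√(P x) * √(Q x)) :=
    fun x => by rw [sub_sq, sq_sqrt (hP0 x), sq_sqrt (hQ0 x)]; ring
  rw [hellingerDist, mul_pow, div_pow, one_pow, sq_sqrt zero_le_two,
    sq_sqrt (sum_nonneg fun _ _ => sq_nonneg _), sum_congr rfl fun x _ => expand x,
    sum_sub_distrib, sum_add_distrib, hP1, hQ1, ← mul_sum, bhattacharyya]
  ring

lemma hellingerDist_sq_le_one {P Q : α → ℝ}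
    (hP0 : ∀ x, 0 ≤ P x) (hQ0 : ∀ x, 0 ≤ Q x)
    (hP1 : ∑ x, P x = 1) (hQ1 : ∑ x, Q x = 1) :
    hellingerDist P Q ^ 2 ≤ 1 := by
  rw [hellingerDist_sq_eq_one_sub_bhattacharyya hP0 hQ0 hP1 hQ1]
  linarith [bhattacharyya_nonneg P Q]

variable {ι : Type*} [Fintype ι] {P : ι → α → ℝ} {q : ι → ℝ}

lemma sum_mixture_eq_one (hP1 : ∀ i, ∑ x, P i x = 1) (hq1 : ∑ i, q i = 1) :
    ∑ x, ∑ i, q i * P i x = 1 := by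
  simp only [sum_comm (γ := α), ← mul_sum, hP1, mul_one, hq1]

lemma sum_mul_bhattacharyya_le (Q : α → ℝ) (hP0 : ∀ i x, 0 ≤ P i x)
    (hq0 : ∀ i, 0 ≤ q i) (hq1 : ∑ i, q i = 1) :
    ∑ i, q i * bhattacharyya (P i) Q ≤ bhattacharyya (fun x => ∑ i, q i * P i x) Q := calc
  ∑ i, q i * bhattacharyya (P i) Q = ∑ x, (∑ i, q i * √(P i x)) * √(Q x) := by
    simp only [bhattacharyya, mul_sum, sum_mul, mul_assoc]
    exact sum_comm
  _ ≤ bhattacharyya (fun x => ∑ i, q i * P i x) Q :=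
    sum_le_sum fun x _ => mul_le_mul_of_nonneg_right
      (sum_mul_sqrt_le_sqrt_sum_mul _ (fun i _ => hq0 i) hq1 fun i _ => hP0 i x)
      (sqrt_nonneg _)

lemma hellingerDist_mixture_sq_le {Q : α → ℝ} (hQ0 : ∀ x, 0 ≤ Q x) (hQ1 : ∑ x, Q x = 1)
    (hP0 : ∀ i x, 0 ≤ P i x) (hP1 : ∀ i, ∑ x, P i x = 1)
    (hq0 : ∀ i, 0 ≤ q i) (hq1 : ∑ i, q i = 1) :
    hellingerDist (fun x => ∑ i, q i * P i x) Q ^ 2 ≤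
      ∑ i, q i * hellingerDist (P i) Q ^ 2 := by
  have hM0 : ∀ x, 0 ≤ ∑ i, q i * P i x := fun x =>
    sum_nonneg fun i _ => mul_nonneg (hq0 i) (hP0 i x)
  simp only [hellingerDist_sq_eq_one_sub_bhattacharyya hM0 hQ0 (sum_mixture_eq_one hP1 hq1) hQ1,
    hellingerDist_sq_eq_one_sub_bhattacharyya (hP0 _) hQ0 (hP1 _) hQ1, mul_sub, mul_one,
    sum_sub_distrib, hq1]
  linarith [sum_mul_bhattacharyya_le Q hP0 hq0 hq1]

end Hellinger

lemma sum_mul_sq_le_two_mul_one_sub_sum {ι : Type*} [Fintype ι] {q d : ι → ℝ}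
    (hq0 : ∀ i, 0 ≤ q i) (hq1 : ∑ i, q i = 1) (hd : ∀ i, d i ^ 2 ≤ 1) :
    ∑ i, q i * d i ^ 2 ≤ 2 * (1 - ∑ i, q i * ((1 / 2) * (1 + (1 - d i ^ 2) ^ 2))) := by
  have pointwise : ∀ i, q i * d i ^ 2 ≤ q i * (1 - (1 - d i ^ 2) ^ 2) := fun i =>
    mul_le_mul_of_nonneg_left (by nlinarith [hd i, sq_nonneg (d i)]) (hq0 i)
  calc ∑ i, q i * d i ^ 2 ≤ ∑ i, q i * (1 - (1 - d i ^ 2) ^ 2) :=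
        sum_le_sum fun i _ => pointwise i
    _ = 2 * ∑ i, q i - 2 * ∑ i, q i * ((1 / 2) * (1 + (1 - d i ^ 2) ^ 2)) := by
      rw [mul_sum, mul_sum, ← sum_sub_distrib]
      exact sum_congr rfl fun i _ => by ring
    _ = 2 * (1 - ∑ i, q i * ((1 / 2) * (1 + (1 - d i ^ 2) ^ 2))) := by
      rw [hq1, mul_sub, mul_one]

theorem hellinger_mixture_close_general (η : ℝ) (hη : η ∈ Set.Ioc (0 : ℝ) 1)
    {α : Type*} [Fintype α] (k : ℕ)
    (Q : α → ℝ) (P : Fin k → α → ℝ) (q : Fin k → ℝ)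
    (hQ0 : ∀ x, 0 ≤ Q x) (hQ1 : ∑ x, Q x = 1)
    (hP0 : ∀ i x, 0 ≤ P i x) (hP1 : ∀ i, ∑ x, P i x = 1)
    (hq : ∀ i, q i ∈ Set.Icc (0 : ℝ) 1) (hq1 : ∑ i, q i = 1)
    (h : ∑ i, q i * ((1 / 2) * (1 + (1 - hellingerDist Q (P i) ^ 2) ^ 2)) ≥
      1 - 50 * η ^ 2) :
    hellingerDist (fun x => ∑ i, q i * P i x) Q ≤ 12 * η ^ ((1 : ℝ) / 4) := by
  obtain ⟨hη0, hη1⟩ := hη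
  have hq0 : ∀ i, 0 ≤ q i := fun i => (hq i).1
  have hmix : hellingerDist (fun x => ∑ i, q i * P i x) Q ^ 2 ≤ (10 * η) ^ 2 := calc
    _ ≤ ∑ i, q i * hellingerDist Q (P i) ^ 2 := by
      simpa only [hellingerDist_comm (P _)] using
        hellingerDist_mixture_sq_le hQ0 hQ1 hP0 hP1 hq0 hq1
    _ ≤ 2 * (1 - ∑ i, q i * ((1 / 2) * (1 + (1 - hellingerDist Q (P i) ^ 2) ^ 2))) :=
      sum_mul_sq_le_two_mul_one_sub_sum hq0 hq1 fun i =>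
        hellingerDist_sq_le_one hQ0 (hP0 i) hQ1 (hP1 i)
    _ ≤ (10 * η) ^ 2 := by linarith
  have h10 : hellingerDist (fun x => ∑ i, q i * P i x) Q ≤ 10 * η :=
    (abs_le_of_sq_le_sq' hmix (by positivity)).2
  have hη_le : η ≤ η ^ ((1 : ℝ) / 4) := self_le_rpow_of_le_one hη0.le hη1 (by norm_num)
  linarith [rpow_nonneg hη0.le ((1 : ℝ) / 4)]

/-- Lemma 4.6: if `Q, P₁, …, P_k` are distributions, `q` is a probability
vector, `f(x) = (1/2)(1 + (1 − x²)²)` and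
`∑ i, q i · f(d_H(Q, P i)) ≥ 1 − 50η²`, then the mixture `∑ i, q i • P i` is
`12·η^(1/4)`-close to `Q` in Hellinger distance. -/
theorem hellinger_mixture_close (η : ℝ) (hη : η ∈ Set.Ioc (0 : ℝ) 1)
    {α : Type*} [Fintype α] (k : ℕ) (hk : 0 < k)
    (Q : α → ℝ) (P : Fin k → α → ℝ) (q : Fin k → ℝ)
    (hQ0 : ∀ x, 0 ≤ Q x) (hQ1 : ∑ x, Q x = 1)
    (hP0 : ∀ i x, 0 ≤ P i x) (hP1 : ∀ i, ∑ x, P i x = 1)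
    (hq : ∀ i, q i ∈ Set.Icc (0 : ℝ) 1) (hq1 : ∑ i, q i = 1)
    (h : ∑ i, q i * ((1 / 2) * (1 + (1 - hellingerDist Q (P i) ^ 2) ^ 2)) ≥
      1 - 50 * η ^ 2) :
    hellingerDist (fun x => ∑ i, q i * P i x) Q ≤ 12 * η ^ ((1 : ℝ) / 4) :=
  hellinger_mixture_close_general η hη k Q P q hQ0 hQ1 hP0 hP1 hq hq1 h
end

section
/- Let α be a finite type, let P, Q be distributions on α, let η ∈ (0, 1] with 6·η² ≤ 1, and let q = (1/2)·(1 + (1 − d_H(P,Q)²)²). Let N be a natural number with 2 * Real.exp (−η^4 * N / 2) < 2/3, and let μ be the product measure on Fin N → Bool of N copies of the Bernoulli measure on Bool with probability q of true. If μ {ω | ((Finset.univ.filter (fun i => ω i = true)).card : ℝ) / N ≥ 1 − 2·η²} ≥ 2/3, then d_H(P, Q) ≤ 3·η. (Probabilistic core of the soundness of Theorem 4.4: if a prover who sends the pure state purifying P in every round passes the verifier's acceptance test, with threshold 1 − 2η² on the empirical mean of the swap-test outcomes, with probability at least 2/3, then the distribution P is O(η)-close to 𝒟_C in Hellinger distance.)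 -/
/-!
If `d = d_H(P, Q) > 3η`, then `d² ≤ 1` gives `q = 1 - d² + d⁴/2 ≤ 1 - d²/2 < 1 - 3η²`, so
the acceptance test can only pass if the number of successes exceeds its mean `Nq` by at least
`Nη²`. By Hoeffding's inequality this has probability at most
`exp (-2Nη⁴) ≤ exp (-η⁴N/2) < 1/3`.
-/

open MeasureTheory

noncomputable def bernoulliMeasure (p : ℝ) : Measure Bool :=
  ENNReal.ofReal p • Measure.dirac true + ENNReal.ofReal (1 - p) • Measure.dirac false

instance (p : ℝ) : IsFiniteMeasure (bernoulliMeasure p) := by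
  constructor
  simp only [bernoulliMeasure, Measure.add_apply, Measure.smul_apply, smul_eq_mul,
    measure_univ, mul_one]
  exact ENNReal.add_lt_top.mpr ⟨ENNReal.ofReal_lt_top, ENNReal.ofReal_lt_top⟩

lemma hellingerDist_nonneg {α : Type*} [Fintype α] (P Q : α → ℝ) : 0 ≤ hellingerDist P Q := by
  unfold hellingerDist
  positivity

lemma hellingerDist_sq_le_one_s8 {α : Type*} [Fintype α] {P Q : α → ℝ}
    (hP₀ : ∀ x, 0 ≤ P x) (hQ₀ : ∀ x, 0 ≤ Q x) (hP₁ : ∑ x, P x = 1) (hQ₁ : ∑ x, Q x = 1) :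
    hellingerDist P Q ^ 2 ≤ 1 := by
  have h_term (x : α) : (√(P x) - √(Q x)) ^ 2 ≤ P x + Q x := by
    nlinarith [Real.sq_sqrt (hP₀ x), Real.sq_sqrt (hQ₀ x), Real.sqrt_nonneg (P x),
      Real.sqrt_nonneg (Q x)]
  have h_sum : ∑ x, (√(P x) - √(Q x)) ^ 2 ≤ 2 :=
    calc ∑ x, (√(P x) - √(Q x)) ^ 2 ≤ ∑ x, (P x + Q x) := Finset.sum_le_sum fun x _ => h_term x
      _ = 2 := by rw [Finset.sum_add_distrib, hP₁, hQ₁]; norm_num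
  rw [hellingerDist, mul_pow, Real.sq_sqrt (Finset.sum_nonneg fun x _ => sq_nonneg _), div_pow,
    one_pow, Real.sq_sqrt zero_le_two]
  linarith

lemma isProbabilityMeasure_bernoulliMeasure {p : ℝ} (hp₀ : 0 ≤ p) (hp₁ : p ≤ 1) :
    IsProbabilityMeasure (bernoulliMeasure p) := by
  constructor
  simp only [bernoulliMeasure, Measure.add_apply, Measure.smul_apply, smul_eq_mul,
    measure_univ, mul_one]
  rw [← ENNReal.ofReal_add hp₀ (by linarith)]
  simp

lemma integral_bernoulliMeasure {p : ℝ} (hp₀ : 0 ≤ p) (hp₁ : p ≤ 1) (f : Bool → ℝ) :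
    ∫ b, f b ∂bernoulliMeasure p = p * f true + (1 - p) * f false := by
  rw [integral_fintype Integrable.of_finite, Fintype.sum_bool]
  simp [bernoulliMeasure, measureReal_def, hp₀, hp₁]

lemma hasSubgaussianMGF_pi_bernoulliMeasure {ι : Type*} [Fintype ι] {p : ℝ} (hp₀ : 0 ≤ p)
    (hp₁ : p ≤ 1) (i : ι) :
    ProbabilityTheory.HasSubgaussianMGF (fun ω : ι → Bool => (if ω i then 1 else 0) - p) 4⁻¹
      (Measure.pi fun _ : ι => bernoulliMeasure p) := by
  have := isProbabilityMeasure_bernoulliMeasure hp₀ hp₁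
  have h_mean : ∫ ω, (if ω i then 1 else 0) ∂(Measure.pi fun _ : ι => bernoulliMeasure p) = p := by
    rw [integral_comp_eval (μ := fun _ : ι => bernoulliMeasure p) (i := i)
      (f := fun b => if b then (1 : ℝ) else 0) Integrable.of_finite.aestronglyMeasurable,
      integral_bernoulliMeasure hp₀ hp₁]
    simp
  have h_bounded := ProbabilityTheory.hasSubgaussianMGF_of_mem_Icc (a := 0) (b := 1)
    (μ := Measure.pi fun _ : ι => bernoulliMeasure p)
    (X := fun ω : ι → Bool => if ω i then (1 : ℝ) else 0) (Measurable.aemeasurable (by fun_prop))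
    (ae_of_all _ fun ω => by by_cases h : ω i <;> simp [h])
  convert h_bounded using 1
  · rw [h_mean]
  · norm_num [div_pow]

open Finset in
lemma measureReal_pi_bernoulliMeasure_card_ge_le {ι : Type*} [Fintype ι] {p t : ℝ}
    (hp₀ : 0 ≤ p) (hp₁ : p ≤ 1) (ht : 0 ≤ t) :
    (Measure.pi fun _ : ι => bernoulliMeasure p).real
        {ω | Fintype.card ι * (p + t) ≤ #{i | ω i = true}} ≤
      Real.exp (-2 * Fintype.card ι * t ^ 2) := by
  have := isProbabilityMeasure_bernoulliMeasure hp₀ hp₁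
  have h_hoeffding := ProbabilityTheory.HasSubgaussianMGF.measure_sum_ge_le_of_iIndepFun
    (ProbabilityTheory.iIndepFun_pi (X := fun (_ : ι) (b : Bool) => (if b then 1 else 0) - p)
      fun _ => Measurable.aemeasurable (by fun_prop))
    (s := univ) (fun i _ => hasSubgaussianMGF_pi_bernoulliMeasure hp₀ hp₁ i)
    (ε := Fintype.card ι * t) (by positivity)
  have h_set : {ω : ι → Bool | Fintype.card ι * (p + t) ≤ #{i | ω i = true}} =
      {ω | Fintype.card ι * t ≤ ∑ i, ((if ω i then 1 else 0) - p)} := by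
    ext ω
    simp only [Set.mem_ofPred_eq, sum_sub_distrib, sum_boole, sum_const, card_univ, nsmul_eq_mul]
    constructor <;> intro h <;> linarith
  have h_exponent : -(Fintype.card ι * t) ^ 2 / (2 * ((∑ _i : ι, 4⁻¹ : NNReal) : ℝ)) =
      -2 * Fintype.card ι * t ^ 2 := by
    rcases eq_or_ne (Fintype.card ι) 0 with h | h
    · simp [h]
    · simp only [sum_const, card_univ, nsmul_eq_mul, NNReal.coe_mul, NNReal.coe_natCast,
        NNReal.coe_inv, NNReal.coe_ofNat]
      field_simp
      ring
  rw [h_set, ← h_exponent]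
  exact h_hoeffding

theorem soundness_probabilistic_core_general {α : Type*} [Fintype α]
    (P Q : α → ℝ)
    (hP0 : ∀ x, 0 ≤ P x) (hQ0 : ∀ x, 0 ≤ Q x)
    (hP1 : ∑ x, P x = 1) (hQ1 : ∑ x, Q x = 1)
    (η : ℝ) (hη : η ∈ Set.Ioc (0 : ℝ) 1)
    (q : ℝ) (hq : q = (1 / 2) * (1 + (1 - hellingerDist P Q ^ 2) ^ 2))
    (N : ℕ) (hN : 2 * Real.exp (-η ^ 4 * N / 2) < 2 / 3)
    (h : (Measure.pi fun _ : Fin N => bernoulliMeasure q)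
        {ω | ((Finset.univ.filter fun i => ω i = true).card : ℝ) / N ≥
          1 - 2 * η ^ 2} ≥ 2 / 3) :
    hellingerDist P Q ≤ 3 * η := by
  obtain ⟨hη₀, -⟩ := hη
  by_contra! h_far
  have hd₀ := hellingerDist_nonneg P Q
  have hd₁ := hellingerDist_sq_le_one_s8 hP0 hQ0 hP1 hQ1
  have hq₀ : 0 ≤ q := by rw [hq]; positivity
  have hq₁ : q ≤ 1 := by rw [hq]; nlinarith
  have hq_far : q + η ^ 2 ≤ 1 - 2 * η ^ 2 := by rw [hq]; nlinarith
  have hN₀ : (0 : ℝ) < N := by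
    rcases N.eq_zero_or_pos with rfl | hN₀
    · norm_num at hN
    · exact_mod_cast hN₀
  have h_accept : {ω : Fin N → Bool | ((Finset.univ.filter fun i => ω i = true).card : ℝ) / N ≥
        1 - 2 * η ^ 2} ⊆
      {ω | Fintype.card (Fin N) * (q + η ^ 2) ≤ (Finset.univ.filter fun i => ω i = true).card} := by
    intro ω hω
    rw [Set.mem_ofPred_eq, ge_iff_le, le_div_iff₀ hN₀] at hω
    rw [Set.mem_ofPred_eq, Fintype.card_fin]
    nlinarith
  have h_accept_prob : (2 / 3 : ℝ) ≤ (Measure.pi fun _ : Fin N => bernoulliMeasure q).real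
      {ω | ((Finset.univ.filter fun i => ω i = true).card : ℝ) / N ≥ 1 - 2 * η ^ 2} := by
    have := ENNReal.toReal_mono (measure_ne_top _ _) h
    rwa [ENNReal.toReal_div] at this
  have h_tail := (measureReal_mono h_accept).trans
    (measureReal_pi_bernoulliMeasure_card_ge_le hq₀ hq₁ (sq_nonneg η))
  have h_exp : Real.exp (-2 * Fintype.card (Fin N) * (η ^ 2) ^ 2) ≤ Real.exp (-η ^ 4 * N / 2) := by
    rw [Real.exp_le_exp, Fintype.card_fin]
    nlinarith [pow_pos hη₀ 4]
  linarith

/-- Probabilistic core of the soundness of Theorem 4.4: in each round the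
verifier's swap-test outcome is Bernoulli with success probability
`q = (1/2)(1 + (1 − d_H(P,Q)²)²)`; if the verifier's acceptance test (empirical
mean at least `1 − 2η²`) passes with probability at least `2/3`, then
`d_H(P, Q) ≤ 3η`. -/
theorem soundness_probabilistic_core {α : Type*} [Fintype α]
    (P Q : α → ℝ)
    (hP0 : ∀ x, 0 ≤ P x) (hQ0 : ∀ x, 0 ≤ Q x)
    (hP1 : ∑ x, P x = 1) (hQ1 : ∑ x, Q x = 1)
    (η : ℝ) (hη : η ∈ Set.Ioc (0 : ℝ) 1) (hη2 : 6 * η ^ 2 ≤ 1)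
    (q : ℝ) (hq : q = (1 / 2) * (1 + (1 - hellingerDist P Q ^ 2) ^ 2))
    (N : ℕ) (hN : 2 * Real.exp (-η ^ 4 * N / 2) < 2 / 3)
    (h : (Measure.pi fun _ : Fin N => bernoulliMeasure q)
        {ω | ((Finset.univ.filter fun i => ω i = true).card : ℝ) / N ≥
          1 - 2 * η ^ 2} ≥ 2 / 3) :
    hellingerDist P Q ≤ 3 * η :=
  soundness_probabilistic_core_general P Q hP0 hQ0 hP1 hQ1 η hη q hq N hN h
end
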